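/- arXiv:2109.05079 — 4 statements merged into one kernel-verified Lean document; each statement's English description precedes it below -/
import Mathlib

section
/- Let X be a standard Borel space and let f : X → [0,+∞] be upper semianalytic (i.e., the set {x ∈ X : f(x) ≥ c} is analytic for every c ∈ ℝ) with f(x) < +∞ for every x ∈ X. Then there exist Borel sets Bₙ ∈ 𝓑(X), n = 1,2,…, with Bₙ ⊆ Bₙ₊₁, ∪ₙ Bₙ = X, and sup_{x∈Bₙ} f(x) < n for every n. -/
open MeasureTheory Set Function PiNat
open scoped ENNReal

section Novikov

variable {α : Type*} [TopologicalSpace α] [T2Space α] [MeasurableSpace α] [OpensMeasurableSpace α]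

/-- A countable family of sets is "Novikov separable" if it can be enclosed in Borel sets
with empty intersection. -/
def NovSep (S : ℕ → Set α) : Prop :=
  ∃ C : ℕ → Set α, (∀ n, S n ⊆ C n) ∧ (∀ n, MeasurableSet (C n)) ∧ (⋂ n, C n) = ∅

theorem NovSep.of_iUnion {S : ℕ → Set α} {k : ℕ} {T : ℕ → Set α} (hS : S k = ⋃ i, T i)
    (h : ∀ i, NovSep (Function.update S k (T i))) : NovSep S := by
  choose C hC hmeas hempty using h
  refine ⟨fun j => if j = k then ⋃ i, C i k else ⋂ i, C i j, fun j => ?_, fun j => ?_, ?_⟩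
  · dsimp only
    by_cases hj : j = k
    · subst hj
      simp only [if_pos rfl, hS]
      refine iUnion_subset fun i => (subset_iUnion _ i).trans' ?_
      simpa using hC i j
    · simp only [if_neg hj]
      refine subset_iInter fun i => ?_
      have := hC i j
      rwa [Function.update_apply, if_neg hj] at this
  · dsimp only
    by_cases hj : j = k
    · subst hj
      rw [if_pos rfl]
      exact MeasurableSet.iUnion fun i => hmeas i j
    · rw [if_neg hj]
      exact MeasurableSet.iInter fun i => hmeas i j
  · ext z
    simp only [mem_iInter, mem_empty_iff_false, iff_false]
    intro hz
    have h1 := hz k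
    rw [if_pos rfl] at h1
    obtain ⟨i, hi⟩ := mem_iUnion.1 h1
    have : z ∈ ⋂ j, C i j := by
      refine mem_iInter.2 fun j => ?_
      by_cases hj : j = k
      · subst hj; exact hi
      · have := hz j
        rw [if_neg hj] at this
        exact mem_iInter.1 this i
    rw [hempty i] at this
    exact this

/-- The hard part of Novikov's separation theorem, for ranges of continuous functions from
`ℕ → ℕ`. -/
theorem novSep_range_of_iInter_eq_empty {f : ℕ → (ℕ → ℕ) → α} (hf : ∀ n, Continuous (f n))
    (h : (⋂ n, range (f n)) = ∅) : NovSep fun n => range (f n) := by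
  by_contra hcon
  -- the family associated to a state (points, lengths)
  set Fam : (ℕ → ℕ → ℕ) → (ℕ → ℕ) → ℕ → Set α :=
    fun σ ℓ n => f n '' cylinder (σ n) (ℓ n) with hFam
  -- one-step refinement of a non-separable family at coordinate `k`
  have I : ∀ (σ : ℕ → ℕ → ℕ) (ℓ : ℕ → ℕ) (k : ℕ), ¬NovSep (Fam σ ℓ) →
      ∃ y : ℕ → ℕ, y ∈ cylinder (σ k) (ℓ k) ∧
        ¬NovSep (Fam (Function.update σ k y) (Function.update ℓ k (ℓ k + 1))) := by
    intro σ ℓ k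
    contrapose!
    intro H
    have hU : Fam σ ℓ k = ⋃ i, f k '' cylinder (Function.update (σ k) (ℓ k) i) (ℓ k + 1) := by
      simp only [hFam]
      rw [← iUnion_cylinder_update (σ k) (ℓ k), image_iUnion]
    refine NovSep.of_iUnion hU fun i => ?_
    have hmem := update_mem_cylinder (σ k) (ℓ k) i
    have := H _ hmem
    convert this using 1
    funext j
    by_cases hj : j = k <;>
      simp [hFam, Function.update_apply, hj]
  -- the type of non-separable states
  let A := { p : (ℕ → ℕ → ℕ) × (ℕ → ℕ) // ¬NovSep (Fam p.1 p.2) }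
  have step : ∀ (k : ℕ) (p : A), ∃ q : A,
      q.1.2 = Function.update p.1.2 k (p.1.2 k + 1) ∧
      q.1.1 k ∈ cylinder (p.1.1 k) (p.1.2 k) ∧ ∀ j, j ≠ k → q.1.1 j = p.1.1 j := by
    intro k p
    obtain ⟨y, hy, hns⟩ := I p.1.1 p.1.2 k p.2
    exact ⟨⟨(Function.update p.1.1 k y, Function.update p.1.2 k (p.1.2 k + 1)), hns⟩,
      rfl, by simp [hy], fun j hj => Function.update_of_ne hj _ _⟩
  choose G hG1 hG2 hG3 using step
  -- initial state
  have h0 : ¬NovSep (Fam (fun _ _ => 0) fun _ => 0) := by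
    convert hcon using 2
    funext n
    simp [hFam, cylinder_zero, image_univ]
  -- the sequence of states, refining coordinate `(Nat.unpair t).1` at step `t`
  let p : ℕ → A := fun t => Nat.rec ⟨((fun _ _ => 0), fun _ => 0), h0⟩
    (fun t q => G (Nat.unpair t).1 q) t
  have prec : ∀ t, p (t + 1) = G (Nat.unpair t).1 (p t) := fun t => rfl
  set ℓt : ℕ → ℕ → ℕ := fun t j => (p t).1.2 j with hℓt
  set σt : ℕ → ℕ → ℕ → ℕ := fun t j => (p t).1.1 j with hσt
  have ℓsucc : ∀ t j, ℓt (t + 1) j = if j = (Nat.unpair t).1 then ℓt t j + 1 else ℓt t j := by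
    intro t j
    simp only [hℓt, prec t, hG1 (Nat.unpair t).1 (p t)]
    by_cases hj : j = (Nat.unpair t).1 <;> simp [Function.update_apply, hj]
  have ℓmono : ∀ j, Monotone fun t => ℓt t j := by
    intro j
    refine monotone_nat_of_le_succ fun t => ?_
    rw [ℓsucc t j]
    split <;> omega
  have ℓunbdd : ∀ j N, ∃ t, N ≤ ℓt t j := by
    intro j N
    induction N with
    | zero => exact ⟨0, Nat.zero_le _⟩
    | succ N ih =>
      obtain ⟨t, ht⟩ := ih
      refine ⟨Nat.pair j t + 1, ?_⟩
      rw [ℓsucc, Nat.unpair_pair, if_pos rfl]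
      have hmt : ℓt t j ≤ ℓt (Nat.pair j t) j := ℓmono j (Nat.right_le_pair j t)
      omega
  -- stabilization of the points below the current length
  have stab1 : ∀ t j m, m < ℓt t j → σt (t + 1) j m = σt t j m := by
    intro t j m hm
    by_cases hj : j = (Nat.unpair t).1
    · subst hj
      have := hG2 (Nat.unpair t).1 (p t)
      rw [mem_cylinder_iff] at this
      exact this m hm
    · simp only [hσt, prec t, hG3 (Nat.unpair t).1 (p t) j hj]
  have stab : ∀ t t' j m, t ≤ t' → m < ℓt t j → σt t' j m = σt t j m := by
    intro t t' j m htt' hm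
    induction t', htt' using Nat.le_induction with
    | base => rfl
    | succ t' ht' ih => rw [stab1 t' j m (lt_of_lt_of_le hm (ℓmono j ht')), ih]
  -- the limit points
  have hT : ∀ j m, ∃ t, m < ℓt t j := fun j m => ℓunbdd j (m + 1)
  choose T hTlt using hT
  set x : ℕ → ℕ → ℕ := fun j m => σt (T j m) j m with hx
  have xeq : ∀ t j m, m < ℓt t j → x j m = σt t j m := by
    intro t j m hm
    have h1 := stab t (max t (T j m)) j m (le_max_left _ _) hm
    have h2 := stab (T j m) (max t (T j m)) j m (le_max_right _ _) (hTlt j m)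
    rw [hx]
    simp only at h1 h2 ⊢
    rw [← h2, h1]
  have cyl_eq : ∀ t j, cylinder (x j) (ℓt t j) = cylinder (σt t j) (ℓt t j) := by
    intro t j
    rw [← mem_cylinder_iff_eq, mem_cylinder_iff]
    intro i hi
    exact xeq t j i hi
  have M : ∀ t, ¬NovSep fun j => f j '' cylinder (x j) (ℓt t j) := by
    intro t
    have heq : (fun j => f j '' cylinder (x j) (ℓt t j))
        = fun j => f j '' cylinder (σt t j) (ℓt t j) := by
      funext j
      rw [cyl_eq t j]
    rw [heq]
    exact (p t).2
  -- the limit points have distinct images for some pair of coordinates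
  have : ∃ a b : ℕ, f a (x a) ≠ f b (x b) := by
    by_contra hz
    push_neg at hz
    have : f 0 (x 0) ∈ ⋂ n, range (f n) :=
      mem_iInter.2 fun n => (hz 0 n) ▸ mem_range_self (x n)
    rw [h] at this
    exact this
  obtain ⟨a, b, hab⟩ := this
  have haneb : a ≠ b := fun hh => hab (by rw [hh])
  obtain ⟨u, v, u_open, v_open, xu, yv, huv⟩ := t2_separation hab
  letI : MetricSpace (ℕ → ℕ) := PiNat.metricSpaceNatNat
  obtain ⟨εa, εapos, hεa⟩ : ∃ εa : ℝ, εa > 0 ∧ Metric.ball (x a) εa ⊆ f a ⁻¹' u :=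
    Metric.mem_nhds_iff.1 ((hf a).continuousAt.preimage_mem_nhds (u_open.mem_nhds xu))
  obtain ⟨εb, εbpos, hεb⟩ : ∃ εb : ℝ, εb > 0 ∧ Metric.ball (x b) εb ⊆ f b ⁻¹' v :=
    Metric.mem_nhds_iff.1 ((hf b).continuousAt.preimage_mem_nhds (v_open.mem_nhds yv))
  obtain ⟨n, hn⟩ : ∃ n : ℕ, (1 / 2 : ℝ) ^ n < min εa εb :=
    exists_pow_lt_of_lt_one (lt_min εapos εbpos) (by norm_num)
  -- choose a stage where both relevant lengths exceed `n`
  obtain ⟨ta, hta⟩ := ℓunbdd a n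
  obtain ⟨tb, htb⟩ := ℓunbdd b n
  set t := max ta tb
  have hna : n ≤ ℓt t a := hta.trans (ℓmono a (le_max_left _ _))
  have hnb : n ≤ ℓt t b := htb.trans (ℓmono b (le_max_right _ _))
  have hsuba : f a '' cylinder (x a) (ℓt t a) ⊆ u := by
    rw [image_subset_iff]
    refine (cylinder_anti (x a) hna).trans ((Subset.trans ?_ hεa))
    intro z hz
    rw [mem_cylinder_iff_dist_le] at hz
    exact hz.trans_lt (hn.trans_le (min_le_left _ _))
  have hsubb : f b '' cylinder (x b) (ℓt t b) ⊆ v := by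
    rw [image_subset_iff]
    refine (cylinder_anti (x b) hnb).trans ((Subset.trans ?_ hεb))
    intro z hz
    rw [mem_cylinder_iff_dist_le] at hz
    exact hz.trans_lt (hn.trans_le (min_le_right _ _))
  refine M t ⟨fun j => if j = a then u else if j = b then v else univ, fun j => ?_, fun j => ?_, ?_⟩
  · dsimp only
    by_cases hja : j = a
    · subst hja
      rw [if_pos rfl]
      exact hsuba
    · rw [if_neg hja]
      by_cases hjb : j = b
      · subst hjb
        rw [if_pos rfl]
        exact hsubb
      · rw [if_neg hjb]
        exact subset_univ _
  · dsimp only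
    by_cases hja : j = a
    · rw [if_pos hja]
      exact u_open.measurableSet
    · rw [if_neg hja]
      by_cases hjb : j = b
      · rw [if_pos hjb]
        exact v_open.measurableSet
      · rw [if_neg hjb]
        exact MeasurableSet.univ
  · apply eq_empty_of_subset_empty
    intro z hz
    have h1 := mem_iInter.1 hz a
    have h2 := mem_iInter.1 hz b
    rw [if_pos rfl] at h1
    rw [if_neg (Ne.symm haneb), if_pos rfl] at h2
    exact (huv.le_bot ⟨h1, h2⟩ : z ∈ (⊥ : Set α))

/-- **Novikov's separation theorem**: countably many analytic sets with empty intersection can be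
enclosed in Borel sets with empty intersection. -/
theorem AnalyticSet.novSep {A : ℕ → Set α} (hA : ∀ n, AnalyticSet (A n))
    (h : (⋂ n, A n) = ∅) : NovSep A := by
  by_cases hne : ∀ n, (A n).Nonempty
  · have : ∀ n, ∃ f : (ℕ → ℕ) → α, Continuous f ∧ range f = A n := by
      intro n
      have han := hA n
      rw [MeasureTheory.AnalyticSet] at han
      rcases han with hn | ⟨f, hf, hfr⟩
      · exact absurd hn (hne n).ne_empty
      · exact ⟨f, hf, hfr⟩
    choose f hf hfr using this
    have := novSep_range_of_iInter_eq_empty hf (by simp_rw [hfr]; exact h)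
    simpa only [hfr] using this
  · push_neg at hne
    obtain ⟨n, hn⟩ := hne
    refine ⟨fun j => if j = n then ∅ else univ, fun j => ?_, fun j => ?_, ?_⟩
    · by_cases hj : j = n
      · subst hj; simp [hn]
      · simp [hj]
    · by_cases hj : j = n <;> simp [hj]
    · apply eq_empty_of_subset_empty
      intro z hz
      have := mem_iInter.1 hz n
      rwa [if_pos rfl] at this

end Novikov

/-- if `f : X → [0,+∞]` is an upper semianalytic function on a standard
Borel (Polish) space `X` which is everywhere finite, then there exist Borel sets
`Bₙ ⊆ Bₙ₊₁` with `⋃ₙ Bₙ = X` and `sup_{x ∈ Bₙ} f(x) < n` for every `n`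
(here indexed so that the bound for `B n` is `n + 1`, `n = 0, 1, …`). -/
theorem exists_borel_exhaustion_of_upperSemianalytic
    {X : Type*} [TopologicalSpace X] [PolishSpace X] [MeasurableSpace X] [BorelSpace X]
    (f : X → ℝ≥0∞)
    (hf : ∀ c : ℝ, MeasureTheory.AnalyticSet {x : X | ENNReal.ofReal c ≤ f x})
    (hfin : ∀ x, f x < ⊤) :
    ∃ B : ℕ → Set X, (∀ n, MeasurableSet (B n)) ∧ (∀ n, B n ⊆ B (n + 1)) ∧
      (⋃ n, B n) = Set.univ ∧ ∀ n : ℕ, (⨆ x ∈ B n, f x) < (n : ℝ≥0∞) + 1 := by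
  set A : ℕ → Set X := fun n => {x : X | ENNReal.ofReal (n + 1/2 : ℝ) ≤ f x} with hA
  have hAan : ∀ n, AnalyticSet (A n) := fun n => hf _
  have hAempty : (⋂ n, A n) = ∅ := by
    apply eq_empty_of_subset_empty
    intro x hx
    obtain ⟨n, hn⟩ := ENNReal.exists_nat_gt (hfin x).ne
    have := mem_iInter.1 hx n
    rw [hA, mem_setOf_eq] at this
    have h2 : (n : ℝ≥0∞) ≤ ENNReal.ofReal (n + 1/2 : ℝ) := by
      rw [← ENNReal.ofReal_natCast n]
      exact ENNReal.ofReal_le_ofReal (by norm_num)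
    exact absurd ((h2.trans this)) (not_le.2 hn)
  obtain ⟨C, hCsub, hCmeas, hCempty⟩ := AnalyticSet.novSep hAan hAempty
  refine ⟨fun n => ⋃ k ≤ n, (C k)ᶜ, fun n => ?_, fun n => ?_, ?_, fun n => ?_⟩
  · exact MeasurableSet.biUnion (to_countable _) fun k _ => (hCmeas k).compl
  · exact iUnion₂_mono' fun k hk => ⟨k, hk.trans (Nat.le_succ n), Subset.rfl⟩
  · apply eq_univ_of_forall
    intro x
    have : x ∉ ⋂ k, C k := by rw [hCempty]; exact notMem_empty x
    obtain ⟨k, hk⟩ := by simpa only [mem_iInter, not_forall] using this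
    exact mem_iUnion.2 ⟨k, mem_iUnion₂.2 ⟨k, le_refl k, hk⟩⟩
  · have hbound : ∀ x ∈ ⋃ k ≤ n, (C k)ᶜ, f x ≤ ENNReal.ofReal (n + 1/2 : ℝ) := by
      intro x hx
      obtain ⟨k, hk, hxk⟩ := by simpa only [mem_iUnion, exists_prop] using hx
      have hxA : x ∉ A k := fun hmem => hxk (hCsub k hmem)
      rw [hA, mem_setOf_eq, not_le] at hxA
      refine hxA.le.trans (ENNReal.ofReal_le_ofReal ?_)
      have : (k : ℝ) ≤ n := Nat.cast_le.2 hk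
      linarith
    calc (⨆ x ∈ ⋃ k ≤ n, (C k)ᶜ, f x) ≤ ENNReal.ofReal (n + 1/2 : ℝ) := iSup₂_le hbound
      _ < (n : ℝ≥0∞) + 1 := by
          rw [show ((n : ℝ≥0∞) + 1) = ENNReal.ofReal (n + 1 : ℝ) by
            rw [ENNReal.ofReal_add (by positivity) zero_le_one]
            simp [ENNReal.ofReal_natCast]]
          exact ENNReal.ofReal_lt_ofReal_iff_of_nonneg (by positivity) |>.2 (by norm_num)
end

section
/- Let q be a conservative Q-function satisfying Assumption L1. Then for every n ≥ 1, u ∈ [T₀,T₁), t ∈ (u,T₁), x ∈ X, and B ∈ 𝓑(X), the functions P̄⁽ⁿ⁾ defined by the backward recursion also satisfy the forward recursion: P̄⁽ⁿ⁾(u,x;t,B) = ∫_u^t ∫_X ∫_B exp(−∫_w^t q(y,θ)dθ) q(z,w,dy∖{z}) P̄⁽ⁿ⁻¹⁾(u,x;w,dz) dw. -/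
open MeasureTheory Set Filter Topology
open scoped ENNReal

noncomputable section

/-- A conservative `Q`-function on the state space `X` with time horizon `[T₀, T₁)`,
`T₁ ≤ +∞`.  It is encoded by the kernel `qp x t = q(x, t, · \ {x})`; since `q` is
conservative, the signed measure `q(x,t,·)` is recovered as
`q(x,t,B) = qp x t B - qp x t univ · 1{x ∈ B}`, so that `q(x,t,X) = 0`. -/
structure ConsQFun (X : Type*) [MeasurableSpace X] (T₀ : ℝ) (T₁ : EReal) where
  qp : X → ℝ → Measure X
  fin : ∀ x t, qp x t Set.univ ≠ ⊤
  diag : ∀ x t, qp x t {x} = 0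
  meas : ∀ B : Set X, MeasurableSet B → Measurable fun p : X × ℝ => qp p.1 p.2 B

namespace ConsQFun

variable {X : Type*} [MeasurableSpace X] {T₀ : ℝ} {T₁ : EReal}

/-- The jump rate `q(x,t) = q(x, t, X \ {x})`, as a real number. -/
def qrate (Q : ConsQFun X T₀ T₁) (x : X) (t : ℝ) : ℝ := (Q.qp x t Set.univ).toReal

/-- `q̄(x) = sup_{t ∈ [T₀,T₁)} q(x,t)`, computed in `ℝ≥0∞`. -/
def qbar (Q : ConsQFun X T₀ T₁) (x : X) : ℝ≥0∞ :=
  ⨆ t ∈ {t : ℝ | T₀ ≤ t ∧ (t : EReal) < T₁}, Q.qp x t Set.univ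

/-- Assumption (Feller): there are Borel sets `Bₙ ↑ X` with `sup_{x ∈ Bₙ} q̄(x) < n`
(for `n = 1, 2, …`; here reindexed by `n ↦ n + 1`). -/
def AssumptionFeller (Q : ConsQFun X T₀ T₁) : Prop :=
  ∃ B : ℕ → Set X, (∀ n, MeasurableSet (B n)) ∧ (∀ n, B n ⊆ B (n + 1)) ∧
    (⋃ n, B n) = Set.univ ∧ ∀ n : ℕ, (⨆ x ∈ B n, Q.qbar x) < (n : ℝ≥0∞) + 1

/-- Assumption (LB): `q̄(x) < ∞` for every `x`. -/
def AssumptionLB (Q : ConsQFun X T₀ T₁) : Prop := ∀ x, Q.qbar x < ⊤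

/-- Assumption (ALB): `sup_{t ∈ [T₀,s)} q(x,t) < ∞` for every `x` and `s ∈ (T₀,T₁)`. -/
def AssumptionALB (Q : ConsQFun X T₀ T₁) : Prop :=
  ∀ (x : X) (s : ℝ), T₀ < s → (s : EReal) < T₁ →
    (⨆ t ∈ Set.Ico T₀ s, Q.qp x t Set.univ) < ⊤

/-- Assumption (L1): `∫_{T₀}^s q(x,t) dt < ∞` for every `x` and `s ∈ (T₀,T₁)`. -/
def AssumptionL1 (Q : ConsQFun X T₀ T₁) : Prop :=
  ∀ (x : X) (s : ℝ), T₀ < s → (s : EReal) < T₁ →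
    ∫⁻ t in Set.Ico T₀ s, Q.qp x t Set.univ < ⊤

/-- A set `B` is `(q,s)`-bounded if `q(x,t)` is bounded on `B × [T₀, s)`; for `s = T₁`
this is the notion of a `q`-bounded set. -/
def QBddOn (Q : ConsQFun X T₀ T₁) (s : EReal) (B : Set X) : Prop :=
  ∃ C : ℝ≥0∞, C ≠ ⊤ ∧ ∀ x ∈ B, ∀ t : ℝ, T₀ ≤ t → (t : EReal) < s → Q.qp x t Set.univ ≤ C

/-- Feller's iterates: `P̄⁽⁰⁾(u,x;t,B) = 1{x∈B} e^{-∫_u^t q(x,s) ds}` and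
`P̄⁽ⁿ⁾(u,x;t,B) = ∫_u^t ∫_X e^{-∫_u^w q(x,θ) dθ} P̄⁽ⁿ⁻¹⁾(w,y;t,B) q(x,w,dy∖{x}) dw`
(the measure `q(x,w, ·∖{x})` is `Q.qp x w`, which has no atom at `x`). -/
def PbarN (Q : ConsQFun X T₀ T₁) : ℕ → ℝ → X → ℝ → Set X → ℝ≥0∞
  | 0 => fun u x t B =>
      B.indicator (fun _ => ENNReal.ofReal (Real.exp (-(∫ s in u..t, Q.qrate x s)))) x
  | n + 1 => fun u x t B =>
      ∫⁻ w in Set.Ioo u t,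
        ∫⁻ y, ENNReal.ofReal (Real.exp (-(∫ θ in u..w, Q.qrate x θ))) * Q.PbarN n w y t B
          ∂(Q.qp x w)

/-- The transition function `P̄(u,x;t,B) = Σ_{n=0}^∞ P̄⁽ⁿ⁾(u,x;t,B)`. -/
def Pbar (Q : ConsQFun X T₀ T₁) (u : ℝ) (x : X) (t : ℝ) (B : Set X) : ℝ≥0∞ :=
  ∑' n, Q.PbarN n u x t B

/-- `P̄` as a real-valued function. -/
def PbarR (Q : ConsQFun X T₀ T₁) (u : ℝ) (x : X) (t : ℝ) (B : Set X) : ℝ :=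
  (Q.Pbar u x t B).toReal

end ConsQFun

/-- A real-valued function `f` is absolutely continuous on a set `s ⊆ ℝ`: for every `ε > 0`
there is `δ > 0` such that for every finite collection of nonoverlapping intervals
`(aᵢ, bᵢ)` with endpoints in `s` and total length `< δ`, `Σ |f(bᵢ) - f(aᵢ)| < ε`. -/
def AbsContinuousOn (f : ℝ → ℝ) (s : Set ℝ) : Prop :=
  ∀ ε > (0 : ℝ), ∃ δ > (0 : ℝ), ∀ (n : ℕ) (a b : ℕ → ℝ),
    (∀ i, i < n → a i ∈ s ∧ b i ∈ s ∧ a i ≤ b i) →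
    (∀ i, i < n → ∀ j, j < n → i ≠ j → Disjoint (Set.Ioo (a i) (b i)) (Set.Ioo (a j) (b j))) →
    (∑ i ∈ Finset.range n, (b i - a i)) < δ →
    (∑ i ∈ Finset.range n, |f (b i) - f (a i)|) < ε


/-! Realize each `P̄⁽ⁿ⁾(u,x;t,·)` as a genuine measure, so that integrals against it can be
computed by unfolding the backward recursion. The forward recursion then follows by induction
on `n`: insert the forward recursion for `P̄⁽ⁿ⁾(w,y;t,B)` into the backward recursion for
`P̄⁽ⁿ⁺¹⁾(u,x;t,B)` and exchange the order of integration over the triangle `u < w < s < t`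
(Tonelli: all integrands are nonnegative). -/

open ProbabilityTheory Function

section MeasurableParametricIntegrals

variable {α : Type*} [MeasurableSpace α]

theorem Measurable.intervalIntegral_prod_right {f : α → ℝ → ℝ}
    (hf : Measurable (uncurry f)) {a b : α → ℝ} (ha : Measurable a) (hb : Measurable b) :
    Measurable fun p => ∫ s in a p..b p, f p s := by
  have hIoc : ∀ {a b : α → ℝ}, Measurable a → Measurable b →
      Measurable fun p => ∫ s in Ioc (a p) (b p), f p s := fun {a b} ha hb => by
    simp_rw [← integral_indicator measurableSet_Ioc]
    have hS : MeasurableSet {q : α × ℝ | q.2 ∈ Ioc (a q.1) (b q.1)} :=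
      (measurableSet_lt (ha.comp measurable_fst) measurable_snd).inter
        (measurableSet_le measurable_snd (hb.comp measurable_fst))
    exact ((hf.indicator hS).stronglyMeasurable.integral_prod_right' (ν := volume)).measurable
  exact (hIoc ha hb).sub (hIoc hb ha)

theorem Measurable.setLIntegral_Ioo_prod_right {f : α → ℝ → ℝ≥0∞}
    (hf : Measurable (uncurry f)) {a b : α → ℝ} (ha : Measurable a) (hb : Measurable b) :
    Measurable fun p => ∫⁻ s in Ioo (a p) (b p), f p s := by
  simp_rw [← lintegral_indicator measurableSet_Ioo]
  have hS : MeasurableSet {q : α × ℝ | q.2 ∈ Ioo (a q.1) (b q.1)} :=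
    (measurableSet_lt (ha.comp measurable_fst) measurable_snd).inter
      (measurableSet_lt measurable_snd (hb.comp measurable_fst))
  exact (hf.indicator hS).lintegral_prod_right'

end MeasurableParametricIntegrals

theorem ProbabilityTheory.Kernel.isSFiniteKernel_of_isFiniteMeasure {α β : Type*}
    [MeasurableSpace α] [MeasurableSpace β] (κ : Kernel α β)
    (hκ : ∀ a, IsFiniteMeasure (κ a)) : IsSFiniteKernel κ := by
  -- `κ` has the finite density `κ a univ` with respect to its normalization, a finite kernel
  let ν : Kernel α β :=
    ⟨fun a => (κ a univ)⁻¹ • κ a, Measure.measurable_of_measurable_coe _ fun s hs =>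
      (κ.measurable_coe MeasurableSet.univ).inv.mul (κ.measurable_coe hs)⟩
  have : IsFiniteKernel ν := ⟨⟨1, ENNReal.one_lt_top, fun a => (κ a univ).inv_mul_le_one⟩⟩
  have hκν : κ = ν.withDensity fun a _ => κ a univ := by
    ext a s hs
    rw [Kernel.withDensity_apply' (f := fun a _ => κ a univ) _
        ((κ.measurable_coe MeasurableSet.univ).comp measurable_fst),
      MeasureTheory.setLIntegral_const]
    change κ a s = κ a univ * ((κ a univ)⁻¹ * κ a s)
    rcases eq_or_ne (κ a univ) 0 with h0 | h0
    · rw [Measure.measure_univ_eq_zero.mp h0]; simp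
    · rw [← mul_assoc, ENNReal.mul_inv_cancel h0 (measure_ne_top _ _), one_mul]
  rw [hκν]
  exact IsSFiniteKernel.withDensity ν fun a _ => measure_ne_top _ _

theorem lintegral_Ioo_lintegral_Ioo_swap {u t : ℝ} {F : ℝ → ℝ → ℝ≥0∞}
    (hF : Measurable (uncurry F)) :
    ∫⁻ w in Ioo u t, ∫⁻ s in Ioo w t, F w s
      = ∫⁻ s in Ioo u t, ∫⁻ w in Ioo u s, F w s := by
  let G : ℝ → ℝ → ℝ≥0∞ := fun w s => (Ioi w).indicator (F w) s
  have hG : Measurable (uncurry G) := hF.indicator (measurableSet_lt measurable_fst measurable_snd)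
  have hleft : EqOn (fun w => ∫⁻ s in Ioo w t, F w s) (fun w => ∫⁻ s in Ioo u t, G w s)
      (Ioo u t) := fun w hw => by
    simp only [G, setLIntegral_indicator measurableSet_Ioi, Ioi_inter_Ioo, max_eq_left hw.1.le]
  have hright : EqOn (fun s => ∫⁻ w in Ioo u s, F w s) (fun s => ∫⁻ w in Ioo u t, G w s)
      (Ioo u t) := fun s hs => by
    have hGs : (fun w => G w s) = (Iio s).indicator fun w => F w s := by
      ext w; simp only [G, indicator_apply, mem_Ioi, mem_Iio]
    simp only [hGs, setLIntegral_indicator measurableSet_Iio, Iio_inter_Ioo, min_eq_left hs.2.le]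
  rw [setLIntegral_congr_fun measurableSet_Ioo hleft,
    setLIntegral_congr_fun measurableSet_Ioo hright]
  exact lintegral_lintegral_swap hG.aemeasurable

namespace ConsQFun

universe u

variable {X : Type u} [MeasurableSpace X] {T₀ : ℝ} {T₁ : EReal} (Q : ConsQFun X T₀ T₁)

instance isFiniteMeasure_qp (x : X) (t : ℝ) : IsFiniteMeasure (Q.qp x t) :=
  ⟨(Q.fin x t).lt_top⟩

theorem measurable_qrate : Measurable (uncurry Q.qrate) :=
  (Q.meas univ MeasurableSet.univ).ennreal_toReal

def survival (u : ℝ) (x : X) (t : ℝ) : ℝ≥0∞ :=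
  ENNReal.ofReal (Real.exp (-(∫ s in u..t, Q.qrate x s)))

theorem survival_ne_top (u : ℝ) (x : X) (t : ℝ) : Q.survival u x t ≠ ⊤ :=
  ENNReal.ofReal_ne_top

theorem measurable_survival {α : Type*} [MeasurableSpace α] {u t : α → ℝ} {x : α → X}
    (hu : Measurable u) (hx : Measurable x) (ht : Measurable t) :
    Measurable fun a => Q.survival (u a) (x a) (t a) :=
  ENNReal.measurable_ofReal.comp <| Real.measurable_exp.comp <| Measurable.neg <|
    Measurable.intervalIntegral_prod_right (f := fun a s => Q.qrate (x a) s)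
      (Q.measurable_qrate.comp ((hx.comp measurable_fst).prodMk measurable_snd)) hu ht

def jumpKernel : Kernel (X × ℝ) X :=
  ⟨fun p => Q.qp p.1 p.2, Measure.measurable_of_measurable_coe _ Q.meas⟩

instance : IsSFiniteKernel Q.jumpKernel :=
  Kernel.isSFiniteKernel_of_isFiniteMeasure _ fun p => Q.isFiniteMeasure_qp p.1 p.2

theorem measurable_lintegral_qp {α : Type*} [MeasurableSpace α] {f : α → X → ℝ≥0∞}
    (hf : Measurable (uncurry f)) {x : α → X} {w : α → ℝ} (hx : Measurable x)
    (hw : Measurable w) : Measurable fun a => ∫⁻ y, f a y ∂Q.qp (x a) (w a) :=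
  hf.lintegral_kernel_prod_right (κ := Q.jumpKernel.comap (fun a => (x a, w a)) (hx.prodMk hw))

theorem PbarN_succ (n : ℕ) (u : ℝ) (x : X) (t : ℝ) (B : Set X) :
    Q.PbarN (n + 1) u x t B
      = ∫⁻ w in Ioo u t, ∫⁻ y, Q.survival u x w * Q.PbarN n w y t B ∂Q.qp x w := rfl

/-- `P̄⁽ⁿ⁾(u,x;t,·)` as a measure, by the backward recursion written with `Measure.bind`. -/
def PbarMeasure : ℕ → ℝ → X → ℝ → Measure X
  | 0 => fun u x t => Q.survival u x t • Measure.dirac x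
  | n + 1 => fun u x t => (volume.restrict (Ioo u t)).bind fun w =>
      Q.survival u x w • (Q.qp x w).bind fun y => PbarMeasure n w y t

theorem lintegral_PbarMeasure_succ {n : ℕ}
    (hPm : Measurable fun p : ℝ × X × ℝ => Q.PbarMeasure n p.1 p.2.1 p.2.2)
    (u : ℝ) (x : X) (t : ℝ) {h : X → ℝ≥0∞} (hh : Measurable h) :
    ∫⁻ z, h z ∂Q.PbarMeasure (n + 1) u x t
      = ∫⁻ w in Ioo u t,
          Q.survival u x w * ∫⁻ y, ∫⁻ z, h z ∂Q.PbarMeasure n w y t ∂Q.qp x w := by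
  have hy : ∀ w, Measurable fun y => Q.PbarMeasure n w y t := fun w =>
    hPm.comp (measurable_const.prodMk (measurable_id.prodMk measurable_const))
  have hbind : Measurable fun w =>
      Q.survival u x w • (Q.qp x w).bind fun y => Q.PbarMeasure n w y t := by
    refine Measure.measurable_of_measurable_coe _ fun s hs => ?_
    simp only [Measure.smul_apply, smul_eq_mul, Measure.bind_apply hs (hy _).aemeasurable]
    refine (Q.measurable_survival measurable_const measurable_const measurable_id).mul ?_
    exact Q.measurable_lintegral_qp (f := fun w y => Q.PbarMeasure n w y t s)
      ((Measure.measurable_coe hs).comp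
        (hPm.comp (measurable_fst.prodMk (measurable_snd.prodMk measurable_const))))
      measurable_const measurable_id
  rw [PbarMeasure, Measure.lintegral_bind hbind.aemeasurable hh.aemeasurable]
  refine lintegral_congr fun w => ?_
  rw [lintegral_smul_measure, smul_eq_mul,
    Measure.lintegral_bind (hy w).aemeasurable hh.aemeasurable]

theorem measurable_PbarMeasure_of_lintegral {n : ℕ}
    (h : ∀ {s : Set X}, MeasurableSet s → Measurable fun p : ℝ × X × ℝ =>
      ∫⁻ z, s.indicator 1 z ∂Q.PbarMeasure n p.1 p.2.1 p.2.2) :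
    Measurable fun p : ℝ × X × ℝ => Q.PbarMeasure n p.1 p.2.1 p.2.2 :=
  Measure.measurable_of_measurable_coe _ fun s hs => by
    simpa only [lintegral_indicator_one hs] using h hs

-- `α` lives in the universe of `X` since the induction step takes `α := (α × ℝ) × X`.
theorem measurable_lintegral_PbarMeasure (n : ℕ) {α : Type u} [MeasurableSpace α]
    {f : α → X → ℝ≥0∞} (hf : Measurable (uncurry f)) {u t : α → ℝ} {x : α → X}
    (hu : Measurable u) (hx : Measurable x) (ht : Measurable t) :
    Measurable fun a => ∫⁻ z, f a z ∂Q.PbarMeasure n (u a) (x a) (t a) := by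
  induction n generalizing α with
  | zero =>
    have hfa : ∀ a, Measurable (f a) := fun a => hf.comp measurable_prodMk_left
    simp only [PbarMeasure, lintegral_smul_measure, lintegral_dirac' _ (hfa _), smul_eq_mul]
    exact (Q.measurable_survival hu hx ht).mul (hf.comp (measurable_id.prodMk hx))
  | succ n ih =>
    have hPm := Q.measurable_PbarMeasure_of_lintegral fun {s} hs =>
      ih (f := fun _ => s.indicator 1) ((measurable_one.indicator hs).comp measurable_snd)
        measurable_fst measurable_snd.fst measurable_snd.snd
    have hsucc := fun a => Q.lintegral_PbarMeasure_succ hPm (u a) (x a) (t a) (h := f a)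
      (hf.comp measurable_prodMk_left)
    simp only [hsucc]
    refine Measurable.setLIntegral_Ioo_prod_right ?_ hu ht
    refine (Q.measurable_survival (hu.comp measurable_fst) (hx.comp measurable_fst)
      measurable_snd).mul (Q.measurable_lintegral_qp ?_ (hx.comp measurable_fst) measurable_snd)
    exact ih (f := fun (q : (α × ℝ) × X) z => f q.1.1 z)
      (hf.comp (measurable_fst.fst.fst.prodMk measurable_snd)) measurable_fst.snd measurable_snd
      (ht.comp measurable_fst.fst)

theorem measurable_PbarMeasure (n : ℕ) :
    Measurable fun p : ℝ × X × ℝ => Q.PbarMeasure n p.1 p.2.1 p.2.2 :=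
  Q.measurable_PbarMeasure_of_lintegral fun {s} hs =>
    Q.measurable_lintegral_PbarMeasure n (f := fun _ => s.indicator 1)
      ((measurable_one.indicator hs).comp measurable_snd)
      measurable_fst measurable_snd.fst measurable_snd.snd

theorem PbarMeasure_apply (n : ℕ) (u : ℝ) (x : X) (t : ℝ) {B : Set X} (hB : MeasurableSet B) :
    Q.PbarMeasure n u x t B = Q.PbarN n u x t B := by
  induction n generalizing u x t with
  | zero =>
    by_cases hx : x ∈ B <;> simp [PbarMeasure, PbarN, survival, hx, Measure.dirac_apply' _ hB]
  | succ n ih =>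
    rw [← lintegral_indicator_one hB, Q.lintegral_PbarMeasure_succ (Q.measurable_PbarMeasure n)
      _ _ _ (measurable_one.indicator hB), PbarN_succ]
    refine lintegral_congr fun w => ?_
    simp only [lintegral_indicator_one hB, ih]
    rw [lintegral_const_mul' _ _ (Q.survival_ne_top u x w)]

def jumpSurvival (w : ℝ) (z : X) (t : ℝ) (B : Set X) : ℝ≥0∞ :=
  ∫⁻ y in B, Q.survival w y t ∂Q.qp z w

theorem measurable_jumpSurvival {α : Type*} [MeasurableSpace α] {w t : α → ℝ} {z : α → X}
    (hw : Measurable w) (hz : Measurable z) (ht : Measurable t) {B : Set X}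
    (hB : MeasurableSet B) : Measurable fun a => Q.jumpSurvival (w a) (z a) (t a) B := by
  simp only [jumpSurvival, ← lintegral_indicator hB]
  exact Q.measurable_lintegral_qp (f := fun a => B.indicator fun y => Q.survival (w a) y (t a))
    ((Q.measurable_survival (hw.comp measurable_fst) measurable_snd
      (ht.comp measurable_fst)).indicator (measurable_snd hB)) hz hw

theorem PbarN_succ_eq_lintegral_jumpSurvival {B : Set X} (hB : MeasurableSet B) (n : ℕ) (u : ℝ)
    (x : X) (t : ℝ) : Q.PbarN (n + 1) u x t B
      = ∫⁻ w in Ioo u t, ∫⁻ z, Q.jumpSurvival w z t B ∂Q.PbarMeasure n u x w := by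
  induction n generalizing u x with
  | zero =>
    rw [PbarN_succ]
    refine lintegral_congr fun w => ?_
    rw [PbarMeasure, lintegral_smul_measure,
      lintegral_dirac' _ (Q.measurable_jumpSurvival measurable_const measurable_id'
        measurable_const hB), smul_eq_mul, lintegral_const_mul' _ _ (Q.survival_ne_top u x w),
      jumpSurvival, ← lintegral_indicator hB]
    rfl
  | succ n ih =>
    have hK : Measurable fun p : ℝ × X × ℝ =>
        ∫⁻ z, Q.jumpSurvival p.2.2 z t B ∂Q.PbarMeasure n p.1 p.2.1 p.2.2 :=
      Q.measurable_lintegral_PbarMeasure n (f := fun p z => Q.jumpSurvival p.2.2 z t B)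
        (Q.measurable_jumpSurvival measurable_fst.snd.snd measurable_snd measurable_const hB)
        measurable_fst measurable_snd.fst measurable_snd.snd
    have hswap : ∀ w, ∫⁻ y, Q.survival u x w * Q.PbarN (n + 1) w y t B ∂Q.qp x w
        = ∫⁻ s in Ioo w t, Q.survival u x w
            * ∫⁻ y, ∫⁻ z, Q.jumpSurvival s z t B ∂Q.PbarMeasure n w y s ∂Q.qp x w :=
        fun w => by
      simp only [ih]
      rw [lintegral_const_mul' _ _ (Q.survival_ne_top u x w),
        lintegral_lintegral_swap (f := fun y s =>
            ∫⁻ z, Q.jumpSurvival s z t B ∂Q.PbarMeasure n w y s)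
          (hK.comp (measurable_const.prodMk (measurable_fst.prodMk measurable_snd))).aemeasurable,
        lintegral_const_mul' _ _ (Q.survival_ne_top u x w)]
    have hF : Measurable (uncurry fun w s => Q.survival u x w
        * ∫⁻ y, ∫⁻ z, Q.jumpSurvival s z t B ∂Q.PbarMeasure n w y s ∂Q.qp x w) :=
      (Q.measurable_survival measurable_const measurable_const measurable_fst).mul
        (Q.measurable_lintegral_qp
          (f := fun (p : ℝ × ℝ) y =>
            ∫⁻ z, Q.jumpSurvival p.2 z t B ∂Q.PbarMeasure n p.1 y p.2)
          (hK.comp (measurable_fst.fst.prodMk (measurable_snd.prodMk measurable_fst.snd)))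
          measurable_const measurable_fst)
    rw [PbarN_succ, lintegral_congr hswap, lintegral_Ioo_lintegral_Ioo_swap hF]
    refine lintegral_congr fun s => ?_
    rw [Q.lintegral_PbarMeasure_succ (Q.measurable_PbarMeasure n) _ _ _
      (Q.measurable_jumpSurvival measurable_const measurable_id' measurable_const hB)]

end ConsQFun

theorem pbarN_forward_recursion_general
    {X : Type*} [MeasurableSpace X]
    {T₀ : ℝ} {T₁ : EReal}
    (Q : ConsQFun X T₀ T₁)
    (n : ℕ) (u t : ℝ) (x : X) (B : Set X)
    (hB : MeasurableSet B)
    (μ : ℝ → Measure X)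
    (hμ : ∀ w, u < w → w < t → ∀ C : Set X, MeasurableSet C → μ w C = Q.PbarN n u x w C) :
    Q.PbarN (n + 1) u x t B =
      ∫⁻ w in Set.Ioo u t,
        ∫⁻ z, (∫⁻ y in B, ENNReal.ofReal (Real.exp (-(∫ θ in w..t, Q.qrate y θ)))
          ∂(Q.qp z w)) ∂(μ w) := by
  rw [Q.PbarN_succ_eq_lintegral_jumpSurvival hB]
  refine setLIntegral_congr_fun measurableSet_Ioo fun w hw => ?_
  have hμw : μ w = Q.PbarMeasure n u x w :=
    Measure.ext fun C hC => (hμ w hw.1 hw.2 C hC).trans (Q.PbarMeasure_apply n u x w hC).symm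
  rw [hμw]
  rfl

/-- forward form of Feller's recursion: under Assumption L1, for every
`n ≥ 1` the iterates `P̄⁽ⁿ⁾`, defined by the backward recursion, also satisfy the forward
recursion `P̄⁽ⁿ⁾(u,x;t,B) = ∫_u^t ∫_X ∫_B e^{-∫_w^t q(y,θ)dθ} q(z,w,dy∖{z})
P̄⁽ⁿ⁻¹⁾(u,x;w,dz) dw`.  The integration with respect to the measure `P̄⁽ⁿ⁻¹⁾(u,x;w,·)` is
expressed by integrating against any measure `μ w` agreeing with `P̄⁽ⁿ⁻¹⁾(u,x;w,·)` on
Borel sets. -/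
theorem pbarN_forward_recursion
    {X : Type*} [MeasurableSpace X] [StandardBorelSpace X]
    {T₀ : ℝ} {T₁ : EReal} (hT : (T₀ : EReal) < T₁)
    (Q : ConsQFun X T₀ T₁) (hL1 : Q.AssumptionL1)
    (n : ℕ) (u t : ℝ) (x : X) (B : Set X)
    (hu : T₀ ≤ u) (hut : u < t) (ht : (t : EReal) < T₁) (hB : MeasurableSet B)
    (μ : ℝ → Measure X)
    (hμ : ∀ w, u < w → w < t → ∀ C : Set X, MeasurableSet C → μ w C = Q.PbarN n u x w C) :
    Q.PbarN (n + 1) u x t B =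
      ∫⁻ w in Set.Ioo u t,
        ∫⁻ z, (∫⁻ y in B, ENNReal.ofReal (Real.exp (-(∫ θ in w..t, Q.qrate y θ)))
          ∂(Q.qp z w)) ∂(μ w) :=
  pbarN_forward_recursion_general Q n u t x B hB μ hμ
end
end

section
/- Let X and A be standard Borel spaces, let Gr(A) ⊆ X×A be a measurable set containing the graph of a measurable map from X to A, and write A(x) := {a ∈ A : (x,a) ∈ Gr(A)} (so A(x) ≠ ∅ for every x). Suppose for each t ∈ ℝ₊ := [0,∞) a measure μ_t on (X×A, 𝓑(X×A)) is given with μ_t(X×A) ≤ 1 and μ_t((X×A)∖Gr(A)) = 0, and such that t ↦ μ_t(D) is Borel measurable for every D ∈ 𝓑(X×A); write ν_t(B) := μ_t(B×A) for B ∈ 𝓑(X). Then there exists a transition probability φ from (ℝ₊×X, 𝓑(ℝ₊×X)) to (A, 𝓑(A)) — i.e., φ(·|x,t) is a probability measure on (A,𝓑(A)) for each (x,t), and (x,t) ↦ φ(U|x,t) is Borel measurable for each U ∈ 𝓑(A) — such that φ(A(x)|x,t) = 1 for all x ∈ X and t ∈ ℝ₊, and for every t ∈ ℝ₊ and U ∈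 𝓑(A), the function x ↦ φ(U|x,t) is a version of the Radon–Nikodym derivative of the measure B ↦ μ_t(B×U) with respect to ν_t (equality holding for ν_t-almost every x ∈ X). -/
open MeasureTheory Set ProbabilityTheory
open scoped ENNReal

/-!
Extend `t ↦ μ t` by `0` on `t < 0` to a finite kernel `κ : ℝ ⇝ X × A` and disintegrate it,
`κ = κ.fst ⊗ₖ κ.condKernel`; the conditional kernel gives the Radon–Nikodym identity.
Since `κ t` does not charge `Grᶜ`, the conditional kernel gives full mass to the section `A(x)`
for `κ.fst t`-almost every `x`; on the remaining measurable set of `(t, x)` replace it by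
`δ_{f x}`, which changes nothing almost everywhere and makes `φ(A(x) | x, t) = 1` everywhere.
-/

namespace ProbabilityTheory.Kernel

variable {α β Ω : Type*} {mα : MeasurableSpace α} {mβ : MeasurableSpace β}
  {mΩ : MeasurableSpace Ω}

lemma isFiniteKernel_piecewise_zero {s : Set α} [DecidablePred (· ∈ s)] (hs : MeasurableSet s)
    (κ : Kernel α β) {C : ℝ≥0∞} (hC : C < ∞) (h : ∀ a ∈ s, κ a univ ≤ C) :
    IsFiniteKernel (piecewise hs κ 0) := by
  refine ⟨⟨C, hC, fun a => ?_⟩⟩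
  by_cases ha : a ∈ s
  · simpa [piecewise_apply, ha] using h a ha
  · simp [piecewise_apply, ha]

section SectionCorrection

variable (η : Kernel (α × β) Ω) [IsSFiniteKernel η] {G : Set (β × Ω)} {f : β → Ω}

lemma measurableSet_setOf_apply_section_eq_one (hG : MeasurableSet G) :
    MeasurableSet {p : α × β | η p {ω | (p.2, ω) ∈ G} = 1} :=
  measurable_kernel_prodMk_left (κ := η)
    ((measurable_snd.comp measurable_fst).prodMk measurable_snd hG) (measurableSet_singleton 1)

open Classical in
noncomputable def sectionCorrection (hG : MeasurableSet G) (hf : Measurable f) :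
    Kernel (α × β) Ω :=
  piecewise (measurableSet_setOf_apply_section_eq_one η hG) η
    (deterministic (f ∘ Prod.snd) (hf.comp measurable_snd))

instance [IsMarkovKernel η] (hG : MeasurableSet G) (hf : Measurable f) :
    IsMarkovKernel (sectionCorrection η hG hf) := by
  unfold sectionCorrection; infer_instance

lemma sectionCorrection_apply_of_apply_section_eq_one (hG : MeasurableSet G)
    (hf : Measurable f) {p : α × β} (hp : η p {ω | (p.2, ω) ∈ G} = 1) :
    sectionCorrection η hG hf p = η p := by
  simp only [sectionCorrection, piecewise_apply, mem_ofPred_eq, hp, if_true]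

lemma sectionCorrection_apply_section (hG : MeasurableSet G) (hf : Measurable f)
    (hfG : ∀ b, (b, f b) ∈ G) (p : α × β) :
    sectionCorrection η hG hf p {ω | (p.2, ω) ∈ G} = 1 := by
  by_cases hp : η p {ω | (p.2, ω) ∈ G} = 1
  · rwa [sectionCorrection_apply_of_apply_section_eq_one η hG hf hp]
  · simp only [sectionCorrection, piecewise_apply, mem_ofPred_eq, hp, if_false,
      deterministic_apply, Function.comp_apply]
    exact Measure.dirac_apply_of_mem (hfG p.2)

end SectionCorrection

section CondKernel

variable [MeasurableSpace.CountableOrCountablyGenerated α β] [StandardBorelSpace Ω] [Nonempty Ω]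
  (κ : Kernel α (β × Ω)) [IsFiniteKernel κ]

lemma apply_prod_eq_setLIntegral_condKernel (a : α) {s : Set β} {t : Set Ω}
    (hs : MeasurableSet s) (ht : MeasurableSet t) :
    κ a (s ×ˢ t) = ∫⁻ b in s, κ.condKernel (a, b) t ∂(κ.fst a) := by
  rw [← compProd_apply_prod hs ht, disintegrate]

lemma ae_condKernel_apply_section_eq_one {G : Set (β × Ω)} (hG : MeasurableSet G) {a : α}
    (hκG : κ a Gᶜ = 0) :
    ∀ᵐ b ∂(κ.fst a), κ.condKernel (a, b) {ω | (b, ω) ∈ G} = 1 := by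
  have hG_ae : ∀ᵐ q ∂(κ.fst ⊗ₖ κ.condKernel) a, q ∈ G := by
    rwa [disintegrate, ae_iff]
  filter_upwards [ae_ae_of_ae_compProd hG_ae] with b hb
  exact (prob_compl_eq_zero_iff (measurable_prodMk_left hG)).mp (ae_iff.mp hb)

lemma apply_prod_eq_setLIntegral_sectionCorrection {G : Set (β × Ω)} (hG : MeasurableSet G)
    {f : β → Ω} (hf : Measurable f) {a : α} (hκG : κ a Gᶜ = 0) {s : Set β} {t : Set Ω}
    (hs : MeasurableSet s) (ht : MeasurableSet t) :
    κ a (s ×ˢ t) =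
      ∫⁻ b in s, sectionCorrection κ.condKernel hG hf (a, b) t ∂(κ.fst a) := by
  rw [apply_prod_eq_setLIntegral_condKernel κ a hs ht]
  refine setLIntegral_congr_fun_ae hs ?_
  filter_upwards [ae_condKernel_apply_section_eq_one κ hG hκG] with b hb _
  rw [sectionCorrection_apply_of_apply_section_eq_one _ hG hf hb]

end CondKernel

end ProbabilityTheory.Kernel

/-- existence of a Markov policy / measurable disintegration: let `X`
and `A` be standard Borel spaces, `Gr ⊆ X × A` a measurable set of feasible state–action
pairs containing the graph of a measurable map `f : X → A`, and for each `t ∈ ℝ₊` let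
`μ t` be a subprobability measure on `X × A` concentrated on `Gr`, measurably in `t`.
Then there is a transition probability `φ` from `ℝ₊ × X` to `A` with `φ(A(x)|x,t) = 1`
for all `x, t`, such that for each `t` and each Borel `U ⊆ A` the function
`x ↦ φ(U|x,t)` is a version of the Radon–Nikodym derivative of `B ↦ μ t (B × U)` with
respect to the marginal `ν t = (μ t) ∘ proj⁻¹`. -/
theorem exists_markov_disintegration
    {X A : Type*} [MeasurableSpace X] [StandardBorelSpace X]
    [MeasurableSpace A] [StandardBorelSpace A]
    (Gr : Set (X × A)) (hGr : MeasurableSet Gr)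
    (f : X → A) (hf : Measurable f) (hfGr : ∀ x, (x, f x) ∈ Gr)
    (μ : ℝ → Measure (X × A))
    (hsub : ∀ t : ℝ, 0 ≤ t → μ t Set.univ ≤ 1)
    (hsupp : ∀ t : ℝ, 0 ≤ t → μ t Grᶜ = 0)
    (hmeas : ∀ D : Set (X × A), MeasurableSet D → Measurable fun t => μ t D) :
    ∃ φ : ℝ × X → Measure A,
      (∀ p : ℝ × X, IsProbabilityMeasure (φ p)) ∧
      (∀ U : Set A, MeasurableSet U → Measurable fun p : ℝ × X => φ p U) ∧
      (∀ (x : X) (t : ℝ), 0 ≤ t → φ (t, x) {a : A | (x, a) ∈ Gr} = 1) ∧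
      (∀ t : ℝ, 0 ≤ t → ∀ U : Set A, MeasurableSet U → ∀ B : Set X, MeasurableSet B →
        μ t (B ×ˢ U) = ∫⁻ x in B, φ (t, x) U ∂((μ t).map Prod.fst)) := by
  rcases isEmpty_or_nonempty X with hX | ⟨⟨x₀⟩⟩
  · refine ⟨fun p => isEmptyElim p.2, fun p => isEmptyElim p.2,
      fun _ _ => measurable_of_empty _, fun x => isEmptyElim x, fun t _ U _ B _ => ?_⟩
    simp [Subsingleton.elim (μ t) 0]
  have : Nonempty A := ⟨f x₀⟩
  let κ : Kernel ℝ (X × A) := Kernel.piecewise (measurableSet_Ici (a := 0))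
    ⟨μ, Measure.measurable_of_measurable_coe μ hmeas⟩ 0
  have hκ : ∀ t, 0 ≤ t → κ t = μ t := fun t ht => by
    simp [κ, Kernel.piecewise_apply, ht]
  have : IsFiniteKernel κ :=
    Kernel.isFiniteKernel_piecewise_zero _ _ ENNReal.one_lt_top hsub
  refine ⟨Kernel.sectionCorrection κ.condKernel hGr hf, fun _ => inferInstance,
    fun U hU => Kernel.measurable_coe _ hU,
    fun x t _ => Kernel.sectionCorrection_apply_section _ hGr hf hfGr (t, x),
    fun t ht U hU B hB => ?_⟩
  rw [← hκ t ht, ← Kernel.fst_apply]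
  refine Kernel.apply_prod_eq_setLIntegral_sectionCorrection κ hGr hf ?_ hB hU
  rw [hκ t ht]; exact hsupp t ht
end

section
/- Let q be a conservative Q-function such that sup{ q(x,t) : x ∈ X, t ∈ [T₀,T₁) } < ∞. Then the transition function P̄ is regular: Σ_{n=0}^∞ P̄⁽ⁿ⁾(u,x;t,X) = 1 for all u ∈ [T₀,T₁), t ∈ (u,T₁), and x ∈ X. -/
open MeasureTheory Set Filter Topology
open scoped ENNReal

noncomputable section

/-!
Truncating `q` at the rate bound `C` gives a finite kernel `κ` that agrees with `q` at all times
in `[T₀, T₁)`. Let `L` be the operator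
`(L h)(u,x) = ∫ᵤᵗ ∫ e^{-∫ᵤʷ q(x,θ)dθ} h(w,y) κ(x,w,dy) dw`; then `P̄⁽ⁿ⁾(·;t,X) = Lⁿ P̄⁽⁰⁾(·;t,X)`,
and `Lⁿ 1` is the probability of at least `n` jumps in `(u,t)`. The survival identity
`P̄⁽⁰⁾ + L 1 = 1` and the linearity of `L` give `∑_{n<N} P̄⁽ⁿ⁾ + Lᴺ 1 = 1`, while
`Lᴺ 1 ≤ (C (t-u))ᴺ / N!` tends to `0`.
-/

open ProbabilityTheory
open scoped NNReal Nat

theorem lipschitzWith_primitive {f : ℝ → ℝ} {C : ℝ≥0} (hf : AEStronglyMeasurable f)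
    (hfC : ∀ w, ‖f w‖ ≤ C) (u : ℝ) : LipschitzWith C fun w => ∫ θ in u..w, f θ := by
  have hfi : ∀ a b, IntervalIntegrable f volume a b := fun a b =>
    (intervalIntegrable_const (c := (C : ℝ))).mono_fun hf.restrict
      (ae_of_all _ fun w => (hfC w).trans (le_abs_self (C : ℝ)))
  refine LipschitzWith.of_dist_le_mul fun a b => ?_
  rw [Real.dist_eq, intervalIntegral.integral_interval_sub_left (hfi u a) (hfi u b),
    ← Real.norm_eq_abs, Real.dist_eq]
  exact intervalIntegral.norm_integral_le_of_norm_le_const fun w _ => hfC w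

theorem lipschitzOnWith_exp_Iic_zero : LipschitzOnWith 1 Real.exp (Iic 0) :=
  (convex_Iic 0).lipschitzOnWith_of_nnnorm_deriv_le (fun _ _ => Real.differentiableAt_exp)
    fun x hx => by
      rw [Real.deriv_exp, ← NNReal.coe_le_coe, coe_nnnorm,
        Real.norm_of_nonneg (Real.exp_pos x).le]
      simpa using hx

/-- `w ↦ e^{-∫ᵤʷ f}` is only Lipschitz, so this needs the fundamental theorem of calculus for
absolutely continuous functions. -/
theorem integral_mul_exp_neg_integral {f : ℝ → ℝ} {C : ℝ≥0} {u t : ℝ} (hf : Measurable f)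
    (hf0 : ∀ w, 0 ≤ f w) (hfC : ∀ w, f w ≤ C) (hut : u ≤ t) :
    ∫ w in u..t, f w * Real.exp (-∫ θ in u..w, f θ) = 1 - Real.exp (-∫ θ in u..t, f θ) := by
  set F : ℝ → ℝ := fun w => ∫ θ in u..w, f θ
  have hnorm : ∀ w, ‖f w‖ ≤ C := fun w => by rw [Real.norm_of_nonneg (hf0 w)]; exact hfC w
  have hG_lip : LipschitzOnWith (1 * C) (fun w => Real.exp (-F w)) (uIcc u t) := by
    refine lipschitzOnWith_exp_Iic_zero.comp
      (lipschitzWith_primitive hf.aestronglyMeasurable hnorm u).neg.lipschitzOnWith fun w hw => ?_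
    rw [uIcc_of_le hut] at hw
    exact neg_nonpos.2 (intervalIntegral.integral_nonneg hw.1 fun θ _ => hf0 θ)
  have hfi : IntervalIntegrable f volume u t :=
    (intervalIntegrable_const (c := (C : ℝ))).mono_fun hf.aestronglyMeasurable.restrict
      (ae_of_all _ fun w => (hnorm w).trans (le_abs_self (C : ℝ)))
  have hderiv : ∀ᵐ w, w ∈ uIoc u t →
      -deriv (fun w => Real.exp (-F w)) w = f w * Real.exp (-F w) := by
    filter_upwards [hfi.ae_hasDerivAt_integral] with w hw hwI
    have hG : HasDerivAt (fun w => Real.exp (-F w)) (Real.exp (-F w) * -f w) w :=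
      (hw (uIoc_subset_uIcc hwI) u left_mem_uIcc).neg.exp
    rw [hG.deriv]
    ring
  rw [← intervalIntegral.integral_congr_ae hderiv, intervalIntegral.integral_neg,
    hG_lip.absolutelyContinuousOnInterval.integral_deriv_eq_sub]
  simp [F]

theorem integral_mul_pow_sub_div_factorial (c u t : ℝ) (n : ℕ) :
    ∫ w in u..t, c * (c * (t - w)) ^ n / n ! = (c * (t - u)) ^ (n + 1) / (n + 1)! := by
  have hderiv : ∀ w, HasDerivAt (fun w => -(c * (t - w)) ^ (n + 1) / (n + 1)!)
      (c * (c * (t - w)) ^ n / n !) w := fun w => by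
    refine ((((hasDerivAt_id' w).const_sub t).const_mul c).pow (n + 1)).neg.div_const
      ((n + 1)! : ℝ) |>.congr_deriv ?_
    rw [Nat.factorial_succ]
    push_cast
    field_simp
  rw [intervalIntegral.integral_eq_sub_of_hasDerivAt (fun w _ => hderiv w)
    ((by fun_prop : Continuous _).intervalIntegrable _ _)]
  simp [neg_div]

theorem measurable_setIntegral_Ioc_of_uncurry {α : Type*} [MeasurableSpace α] {f : α → ℝ → ℝ}
    (hf : Measurable (Function.uncurry f)) {a b : α → ℝ} (ha : Measurable a) (hb : Measurable b) :
    Measurable fun p => ∫ θ in Ioc (a p) (b p), f p θ := by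
  have hs : MeasurableSet {q : α × ℝ | q.2 ∈ Ioc (a q.1) (b q.1)} :=
    (measurableSet_lt (ha.comp measurable_fst) measurable_snd).inter
      (measurableSet_le measurable_snd (hb.comp measurable_fst))
  have hind : Measurable fun q : α × ℝ => (Ioc (a q.1) (b q.1)).indicator (f q.1) q.2 :=
    hf.indicator hs
  simpa only [integral_indicator measurableSet_Ioc] using
    hind.stronglyMeasurable.integral_prod_right'.measurable

theorem measurable_intervalIntegral_of_uncurry {α : Type*} [MeasurableSpace α] {f : α → ℝ → ℝ}
    (hf : Measurable (Function.uncurry f)) {a b : α → ℝ} (ha : Measurable a) (hb : Measurable b) :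
    Measurable fun p => ∫ θ in a p..b p, f p θ :=
  (measurable_setIntegral_Ioc_of_uncurry hf ha hb).sub
    (measurable_setIntegral_Ioc_of_uncurry hf hb ha)

theorem ENNReal.tsum_eq_of_sum_range_add_tendsto_zero {a r : ℕ → ℝ≥0∞} {c : ℝ≥0∞} (hc : c ≠ ∞)
    (h : ∀ N, ∑ n ∈ Finset.range N, a n + r N = c) (hr : Tendsto r atTop (𝓝 0)) :
    ∑' n, a n = c := by
  have hsum : ∀ N, ∑ n ∈ Finset.range N, a n = c - r N := fun N =>
    ENNReal.eq_sub_of_add_eq (ne_top_of_le_ne_top hc (le_add_self.trans (h N).le)) (h N)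
  refine tendsto_nhds_unique (ENNReal.tendsto_nat_tsum a) ?_
  simpa only [hsum, tsub_zero] using ENNReal.Tendsto.sub tendsto_const_nhds hr (Or.inl hc)

namespace ProbabilityTheory.Kernel

variable {X : Type*} [MeasurableSpace X] (κ : Kernel (X × ℝ) X)

def jumpRate (x : X) (w : ℝ) : ℝ := (κ (x, w) univ).toReal

def survivalProb (x : X) (u w : ℝ) : ℝ≥0∞ :=
  ENNReal.ofReal (Real.exp (-∫ θ in u..w, κ.jumpRate x θ))

def jumpOp (t : ℝ) (h : ℝ → X → ℝ≥0∞) (u : ℝ) (x : X) : ℝ≥0∞ :=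
  ∫⁻ w in Ioo u t, ∫⁻ y, κ.survivalProb x u w * h w y ∂κ (x, w)

variable {κ}

lemma jumpRate_nonneg (x : X) (w : ℝ) : 0 ≤ κ.jumpRate x w := ENNReal.toReal_nonneg

lemma jumpRate_le_bound [IsFiniteKernel κ] (x : X) (w : ℝ) :
    κ.jumpRate x w ≤ κ.bound.toReal :=
  ENNReal.toReal_mono κ.bound_ne_top (κ.measure_le_bound _ _)

lemma ofReal_jumpRate [IsFiniteKernel κ] (x : X) (w : ℝ) :
    ENNReal.ofReal (κ.jumpRate x w) = κ (x, w) univ :=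
  ENNReal.ofReal_toReal (measure_ne_top _ _)

lemma measurable_jumpRate : Measurable (Function.uncurry κ.jumpRate) :=
  (κ.measurable_coe MeasurableSet.univ).ennreal_toReal

lemma survivalProb_le_one {u w : ℝ} (huw : u ≤ w) (x : X) : κ.survivalProb x u w ≤ 1 :=
  ENNReal.ofReal_le_one.2 <| Real.exp_le_one_iff.2 <| neg_nonpos.2 <|
    intervalIntegral.integral_nonneg huw fun θ _ => jumpRate_nonneg x θ

lemma measurable_survivalProb :
    Measurable fun p : (ℝ × X) × ℝ => κ.survivalProb p.1.2 p.1.1 p.2 := by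
  have h := measurable_intervalIntegral_of_uncurry (f := fun p : (ℝ × X) × ℝ => κ.jumpRate p.1.2)
    (measurable_jumpRate.comp (measurable_fst.fst.snd.prodMk measurable_snd)) measurable_fst.fst
    measurable_snd
  exact ENNReal.measurable_ofReal.comp (Real.measurable_exp.comp h.neg)

variable {t : ℝ} {f g : ℝ → X → ℝ≥0∞}

lemma measurable_jumpOp_integrand [IsSFiniteKernel κ] (hf : Measurable (Function.uncurry f)) :
    Measurable fun p : (ℝ × X) × ℝ =>
      ∫⁻ y, κ.survivalProb p.1.2 p.1.1 p.2 * f p.2 y ∂κ (p.1.2, p.2) := by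
  have hm : Measurable fun q : ((ℝ × X) × ℝ) × X =>
      κ.survivalProb q.1.1.2 q.1.1.1 q.1.2 * f q.1.2 q.2 :=
    (measurable_survivalProb.comp measurable_fst).mul
      (hf.comp (measurable_fst.snd.prodMk measurable_snd))
  exact hm.lintegral_kernel_prod_right'
    (κ := κ.comap (fun p : (ℝ × X) × ℝ => (p.1.2, p.2)) (measurable_fst.snd.prodMk measurable_snd))

lemma measurable_jumpOp [IsSFiniteKernel κ] (hf : Measurable (Function.uncurry f)) :
    Measurable (Function.uncurry (κ.jumpOp t f)) := by
  have hs : MeasurableSet {q : (ℝ × X) × ℝ | q.2 ∈ Ioo q.1.1 t} :=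
    (measurableSet_lt measurable_fst.fst measurable_snd).inter
      (measurableSet_lt measurable_snd measurable_const)
  have hind := ((measurable_jumpOp_integrand (κ := κ) hf).indicator hs).lintegral_prod_right'
    (ν := volume)
  convert hind using 1
  funext p
  rw [Function.uncurry_apply_pair, jumpOp, ← lintegral_indicator measurableSet_Ioo]
  rfl

lemma measurable_iterate_jumpOp [IsSFiniteKernel κ] (hf : Measurable (Function.uncurry f))
    (n : ℕ) : Measurable (Function.uncurry ((κ.jumpOp t)^[n] f)) := by
  induction n with
  | zero => exact hf
  | succ n ih => rw [Function.iterate_succ_apply']; exact measurable_jumpOp ih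

lemma jumpOp_congr {u : ℝ} {x : X} (h : ∀ w ∈ Ioo u t, ∀ y, f w y = g w y) :
    κ.jumpOp t f u x = κ.jumpOp t g u x :=
  setLIntegral_congr_fun measurableSet_Ioo fun w hw => lintegral_congr fun y => by rw [h w hw y]

lemma jumpOp_mono {u : ℝ} {x : X} (h : ∀ w ∈ Ioo u t, ∀ y, f w y ≤ g w y) :
    κ.jumpOp t f u x ≤ κ.jumpOp t g u x :=
  setLIntegral_mono' measurableSet_Ioo fun w hw =>
    lintegral_mono fun y => by gcongr; exact h w hw y

lemma jumpOp_add [IsSFiniteKernel κ] (hf : Measurable (Function.uncurry f)) (u : ℝ) (x : X) :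
    κ.jumpOp t (f + g) u x = κ.jumpOp t f u x + κ.jumpOp t g u x := by
  have hinner : Measurable fun w => ∫⁻ y, κ.survivalProb x u w * f w y ∂κ (x, w) :=
    (measurable_jumpOp_integrand (κ := κ) hf).comp (measurable_prodMk_left (x := (u, x)))
  rw [jumpOp, jumpOp, jumpOp, ← lintegral_add_left hinner]
  refine lintegral_congr fun w => ?_
  have hfw : Measurable fun y => κ.survivalProb x u w * f w y :=
    measurable_const.mul (hf.comp measurable_prodMk_left)
  rw [← lintegral_add_left hfw]
  simp only [Pi.add_apply, mul_add]

lemma jumpOp_zero (u : ℝ) (x : X) : κ.jumpOp t 0 u x = 0 := by simp [jumpOp]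

lemma jumpOp_sum [IsSFiniteKernel κ] {ι : Type*} (s : Finset ι) {f : ι → ℝ → X → ℝ≥0∞}
    (hf : ∀ i ∈ s, Measurable (Function.uncurry (f i))) (u : ℝ) (x : X) :
    κ.jumpOp t (∑ i ∈ s, f i) u x = ∑ i ∈ s, κ.jumpOp t (f i) u x := by
  classical
  induction s using Finset.induction_on with
  | empty => simp [jumpOp_zero]
  | insert i s hi ih =>
    rw [Finset.sum_insert hi, Finset.sum_insert hi, jumpOp_add (hf i (s.mem_insert_self i)),
      ih fun j hj => hf j (Finset.mem_insert_of_mem hj)]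

lemma jumpOp_one (u : ℝ) (x : X) :
    κ.jumpOp t 1 u x = ∫⁻ w in Ioo u t, κ.survivalProb x u w * κ (x, w) univ := by
  simp [jumpOp]

lemma survivalProb_add_jumpOp_one [IsFiniteKernel κ] {u : ℝ} (hut : u ≤ t) (x : X) :
    κ.survivalProb x u t + κ.jumpOp t 1 u x = 1 := by
  set F : ℝ → ℝ := fun w => ∫ θ in u..w, κ.jumpRate x θ
  have hrate : Measurable (κ.jumpRate x) := measurable_jumpRate.comp measurable_prodMk_left
  have hF : Continuous F := (lipschitzWith_primitive (C := κ.bound.toNNReal)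
    hrate.aestronglyMeasurable (fun w => by
      rw [Real.norm_of_nonneg (jumpRate_nonneg x w)]; exact jumpRate_le_bound x w) u).continuous
  have hint : IntegrableOn (fun w => κ.jumpRate x w * Real.exp (-F w)) (Ioo u t) := by
    refine Measure.integrableOn_of_bounded (M := κ.bound.toReal) measure_Ioo_lt_top.ne
      (hrate.mul (Real.continuous_exp.comp hF.neg).measurable).aestronglyMeasurable
      ((ae_restrict_iff' measurableSet_Ioo).2 (ae_of_all _ fun w hw => ?_))
    rw [Real.norm_of_nonneg (mul_nonneg (jumpRate_nonneg x w) (Real.exp_pos _).le)]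
    calc κ.jumpRate x w * Real.exp (-F w) ≤ κ.bound.toReal * 1 :=
          mul_le_mul (jumpRate_le_bound x w)
            (Real.exp_le_one_iff.2 (neg_nonpos.2
              (intervalIntegral.integral_nonneg hw.1.le fun θ _ => jumpRate_nonneg x θ)))
            (Real.exp_pos _).le ENNReal.toReal_nonneg
      _ = κ.bound.toReal := mul_one _
  have hjump : κ.jumpOp t 1 u x = ENNReal.ofReal (1 - Real.exp (-F t)) := by
    rw [← integral_mul_exp_neg_integral hrate (jumpRate_nonneg x) (jumpRate_le_bound x) hut,
      intervalIntegral.integral_of_le hut, integral_Ioc_eq_integral_Ioo,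
      ofReal_integral_eq_lintegral_ofReal hint
        (ae_of_all _ fun w => mul_nonneg (jumpRate_nonneg x w) (Real.exp_pos _).le),
      jumpOp_one]
    refine lintegral_congr fun w => ?_
    rw [ENNReal.ofReal_mul (jumpRate_nonneg x w), ofReal_jumpRate, mul_comm]
    rfl
  have hexp : Real.exp (-F t) ≤ 1 := Real.exp_le_one_iff.2 (neg_nonpos.2
    (intervalIntegral.integral_nonneg hut fun θ _ => jumpRate_nonneg x θ))
  rw [hjump, survivalProb, ← ENNReal.ofReal_add (Real.exp_pos _).le (sub_nonneg.2 hexp),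
    add_sub_cancel, ENNReal.ofReal_one]

lemma iterate_jumpOp_one_le [IsFiniteKernel κ] (n : ℕ) {u : ℝ} (hut : u ≤ t) (x : X) :
    (κ.jumpOp t)^[n] 1 u x ≤ ENNReal.ofReal ((κ.bound.toReal * (t - u)) ^ n / n !) := by
  set C := κ.bound.toReal
  induction n generalizing u x with
  | zero => simp
  | succ n ih =>
    rw [Function.iterate_succ_apply']
    calc κ.jumpOp t ((κ.jumpOp t)^[n] 1) u x
        ≤ κ.jumpOp t (fun w _ => ENNReal.ofReal ((C * (t - w)) ^ n / n !)) u x :=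
          jumpOp_mono fun w hw y => ih hw.2.le y
      _ ≤ ∫⁻ w in Ioo u t, ENNReal.ofReal (C * (C * (t - w)) ^ n / n !) := by
          refine setLIntegral_mono' measurableSet_Ioo fun w hw => ?_
          simp only [MeasureTheory.lintegral_const]
          calc κ.survivalProb x u w * ENNReal.ofReal ((C * (t - w)) ^ n / n !) * κ (x, w) univ
              ≤ 1 * ENNReal.ofReal ((C * (t - w)) ^ n / n !) * κ.bound := by
                gcongr
                exacts [survivalProb_le_one hw.1.le x, κ.measure_le_bound _ _]
            _ = _ := by
                rw [one_mul, mul_comm, ← ENNReal.ofReal_toReal κ.bound_ne_top,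
                  ← ENNReal.ofReal_mul ENNReal.toReal_nonneg, ← mul_div_assoc]
      _ = ENNReal.ofReal ((C * (t - u)) ^ (n + 1) / (n + 1)!) := by
          rw [← integral_mul_pow_sub_div_factorial, intervalIntegral.integral_of_le hut,
            integral_Ioc_eq_integral_Ioo, ofReal_integral_eq_lintegral_ofReal]
          · exact (Continuous.integrableOn_Icc (by fun_prop)).mono_set Ioo_subset_Icc_self
          · refine (ae_restrict_iff' measurableSet_Ioo).2 (ae_of_all _ fun w hw => ?_)
            have : 0 ≤ t - w := sub_nonneg.2 hw.2.le
            positivity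

lemma measurable_uncurry_survivalProb :
    Measurable (Function.uncurry fun u x => κ.survivalProb x u t) :=
  measurable_survivalProb.comp (f := fun p : ℝ × X => (p, t)) (by fun_prop)

lemma sum_range_iterate_jumpOp_add_iterate_jumpOp_one [IsFiniteKernel κ] (N : ℕ) {u : ℝ}
    (hut : u ≤ t) (x : X) :
    ∑ n ∈ Finset.range N, (κ.jumpOp t)^[n] (fun u x => κ.survivalProb x u t) u x
      + (κ.jumpOp t)^[N] 1 u x = 1 := by
  induction N generalizing u x with
  | zero => simp
  | succ N ih =>
    have hmeas : ∀ n, Measurable (Function.uncurry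
        ((κ.jumpOp t)^[n] fun u x => κ.survivalProb x u t)) :=
      measurable_iterate_jumpOp measurable_uncurry_survivalProb
    have hsum_meas : Measurable (Function.uncurry
        (∑ n ∈ Finset.range N, (κ.jumpOp t)^[n] fun u x => κ.survivalProb x u t)) := by
      convert Finset.measurable_sum (Finset.range N) fun n _ => hmeas n using 1
      funext p
      simp only [Function.uncurry, Finset.sum_apply]
    simp only [Finset.sum_range_succ', Function.iterate_succ_apply', Function.iterate_zero_apply]
    rw [add_comm _ (κ.survivalProb x u t), add_assoc,
      ← jumpOp_sum _ fun n _ => hmeas n, ← jumpOp_add hsum_meas]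
    rw [jumpOp_congr (g := 1) fun w hw y => by
      simpa only [Pi.add_apply, Pi.one_apply, Finset.sum_apply] using ih hw.2.le y]
    exact survivalProb_add_jumpOp_one hut x

theorem tsum_iterate_jumpOp_survivalProb [IsFiniteKernel κ] {u : ℝ} (hut : u ≤ t) (x : X) :
    ∑' n, (κ.jumpOp t)^[n] (fun u x => κ.survivalProb x u t) u x = 1 := by
  refine ENNReal.tsum_eq_of_sum_range_add_tendsto_zero ENNReal.one_ne_top
    (fun N => sum_range_iterate_jumpOp_add_iterate_jumpOp_one N hut x) ?_
  have hbound : Tendsto (fun n => ENNReal.ofReal ((κ.bound.toReal * (t - u)) ^ n / n !)) atTop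
      (𝓝 0) := by
    simpa using ENNReal.tendsto_ofReal
      (FloorSemiring.tendsto_pow_div_factorial_atTop (κ.bound.toReal * (t - u)))
  exact tendsto_of_tendsto_of_tendsto_of_le_of_le tendsto_const_nhds hbound (fun _ => bot_le)
    fun n => iterate_jumpOp_one_le n hut x

end ProbabilityTheory.Kernel

namespace ConsQFun

variable {X : Type*} [MeasurableSpace X] {T₀ : ℝ} {T₁ : EReal} (Q : ConsQFun X T₀ T₁)

/-- A finite kernel is needed for the measurability of the iterated integrals; truncation at `C`
does not change `Q.qp` where the rates are bounded by `C`. -/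
def truncKernel (C : ℝ≥0∞) : Kernel (X × ℝ) X where
  toFun p := if Q.qp p.1 p.2 univ ≤ C then Q.qp p.1 p.2 else 0
  measurable' := by
    have hqp : Measurable fun p : X × ℝ => Q.qp p.1 p.2 :=
      Measure.measurable_of_measurable_coe _ Q.meas
    exact Measurable.ite (measurableSet_le (Q.meas _ MeasurableSet.univ) measurable_const)
      hqp measurable_const

variable {Q}

lemma truncKernel_apply_of_le {C : ℝ≥0∞} {x : X} {w : ℝ} (h : Q.qp x w univ ≤ C) :
    Q.truncKernel C (x, w) = Q.qp x w :=
  if_pos h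

lemma isFiniteKernel_truncKernel {C : ℝ≥0∞} (hC : C ≠ ∞) : IsFiniteKernel (Q.truncKernel C) :=
  ⟨⟨C, hC.lt_top, fun p => by
    change (if Q.qp p.1 p.2 univ ≤ C then Q.qp p.1 p.2 else 0) univ ≤ C
    split_ifs with h
    exacts [h, zero_le]⟩⟩

theorem pbarN_univ_eq_iterate_jumpOp {κ : Kernel (X × ℝ) X} {t : ℝ}
    (hκ : ∀ x w, T₀ ≤ w → w ≤ t → κ (x, w) = Q.qp x w) (n : ℕ) {u : ℝ} (hu : T₀ ≤ u)
    (hut : u ≤ t) (x : X) :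
    Q.PbarN n u x t univ = (κ.jumpOp t)^[n] (fun u x => κ.survivalProb x u t) u x := by
  have hsurv : ∀ {u w : ℝ} (x : X), T₀ ≤ u → u ≤ w → w ≤ t →
      ENNReal.ofReal (Real.exp (-∫ θ in u..w, Q.qrate x θ)) = κ.survivalProb x u w :=
    fun x hu huw hwt => by
      rw [Kernel.survivalProb, intervalIntegral.integral_congr fun θ hθ => ?_]
      rw [uIcc_of_le huw] at hθ
      rw [Kernel.jumpRate, hκ x θ (hu.trans hθ.1) (hθ.2.trans hwt), qrate]
  induction n generalizing u x with
  | zero => simp [PbarN, hsurv x hu hut le_rfl]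
  | succ n ih =>
    rw [Function.iterate_succ_apply', Kernel.jumpOp, PbarN]
    refine setLIntegral_congr_fun measurableSet_Ioo fun w hw => ?_
    rw [hκ x w (hu.trans hw.1.le) hw.2.le, hsurv x hu hw.1.le hw.2.le]
    exact lintegral_congr fun y => by rw [ih (hu.trans hw.1.le) hw.2.le y]

end ConsQFun

theorem pbar_regular_of_bounded_rates_general
    {X : Type*} [MeasurableSpace X]
    {T₀ : ℝ} {T₁ : EReal}
    (Q : ConsQFun X T₀ T₁)
    (hbdd : ∃ C : ℝ≥0∞, C ≠ ⊤ ∧ ∀ (x : X) (t : ℝ), T₀ ≤ t → (t : EReal) < T₁ →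
      Q.qp x t Set.univ ≤ C) :
    ∀ (u t : ℝ) (x : X), T₀ ≤ u → u < t → (t : EReal) < T₁ →
      Q.Pbar u x t Set.univ = 1 := by
  obtain ⟨C, hC, hQC⟩ := hbdd
  intro u t x hu hut ht
  have := ConsQFun.isFiniteKernel_truncKernel (Q := Q) hC
  have hagree : ∀ y w, T₀ ≤ w → w ≤ t → Q.truncKernel C (y, w) = Q.qp y w :=
    fun y w hw hwt => ConsQFun.truncKernel_apply_of_le
      (hQC y w hw ((EReal.coe_le_coe_iff.2 hwt).trans_lt ht))
  rw [ConsQFun.Pbar, ← Kernel.tsum_iterate_jumpOp_survivalProb (κ := Q.truncKernel C) hut.le x]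
  exact tsum_congr fun n => ConsQFun.pbarN_univ_eq_iterate_jumpOp hagree n hu hut.le x

/-- if the jump rates of a conservative Q-function are uniformly bounded,
`sup { q(x,t) : x ∈ X, t ∈ [T₀,T₁) } < ∞`, then the transition function `P̄` is regular:
`Σ_{n=0}^∞ P̄⁽ⁿ⁾(u,x;t,X) = 1` for all `u ∈ [T₀,T₁)`, `t ∈ (u,T₁)` and `x ∈ X`. -/
theorem pbar_regular_of_bounded_rates
    {X : Type*} [MeasurableSpace X] [StandardBorelSpace X]
    {T₀ : ℝ} {T₁ : EReal} (hT : (T₀ : EReal) < T₁)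
    (Q : ConsQFun X T₀ T₁)
    (hbdd : ∃ C : ℝ≥0∞, C ≠ ⊤ ∧ ∀ (x : X) (t : ℝ), T₀ ≤ t → (t : EReal) < T₁ →
      Q.qp x t Set.univ ≤ C) :
    ∀ (u t : ℝ) (x : X), T₀ ≤ u → u < t → (t : EReal) < T₁ →
      Q.Pbar u x t Set.univ = 1 :=
  pbar_regular_of_bounded_rates_general Q hbdd
end
end
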